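/- Let G be a group satisfying (H1) and (H2), and suppose that the intersection of the normalizers N_G(B) over all basal subgroups B of G is trivial. Let A be a nontrivial basal subgroup of G. Then the rigid normalizer R(A) is a basal subgroup of G and C_G(R(A)) = C_G(A) (so R(A) is the unique maximal element of the equivalence class of A). -/

import Mathlib

variable {G : Type*} [Group G]

/-- The conjugate `B ^ g = g⁻¹ * B * g` of a subgroup `B` by an element `g`. -/
def conjBy (B : Subgroup G) (g : G) : Subgroup G :=
  B.map (MulAut.conj g⁻¹).toMonoidHom

/-- A subgroup is virtually solvable if it has a solvable subgroup of finite index. -/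
def VirtSolvable (H : Subgroup G) : Prop :=
  ∃ M : Subgroup G, M ≤ H ∧ M.relIndex H ≠ 0 ∧ IsSolvable ↥M

/-- A subgroup is virtually nilpotent if it has a nilpotent subgroup of finite index. -/
def VirtNilpotent (H : Subgroup G) : Prop :=
  ∃ M : Subgroup G, M ≤ H ∧ M.relIndex H ≠ 0 ∧ Group.IsNilpotent ↥M

/-- Hypothesis (H1): every virtually solvable subgroup whose normalizer has finite index
(i.e. belonging to `L(G)`) is trivial. -/
def HypH1 (G : Type*) [Group G] : Prop :=
  ∀ H : Subgroup G, (Subgroup.normalizer (H : Set G)).FiniteIndex → VirtSolvable H → H = ⊥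

/-- Hypothesis (H2): every nontrivial normal subgroup of `G` contains the derived subgroup
of some finite-index subgroup of `G`. -/
def HypH2 (G : Type*) [Group G] : Prop :=
  ∀ N : Subgroup G, N.Normal → N ≠ ⊥ →
    ∃ G₀ : Subgroup G, G₀.FiniteIndex ∧ ⁅G₀, G₀⁆ ≤ N

/-- `VA K H` means `K ≤va H`: `K ≤ H` and `K` contains the derived subgroup of some
finite-index subgroup of `H`. -/
def VA (K H : Subgroup G) : Prop :=
  K ≤ H ∧ ∃ A : Subgroup G, A ≤ H ∧ A.relIndex H ≠ 0 ∧ ⁅A, A⁆ ≤ K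

/-- A subgroup `B` is basal if its normalizer has finite index and every conjugate of `B`
either equals `B` or meets `B` trivially. -/
def IsBasal (B : Subgroup G) : Prop :=
  (Subgroup.normalizer (B : Set G)).FiniteIndex ∧ ∀ g : G, conjBy B g = B ∨ conjBy B g ⊓ B = ⊥

/-- The rigid normalizer `R(A)` of a basal subgroup `A`: the intersection of the
normalizers of all basal subgroups meeting `A` trivially. -/
def rigidNormalizer (A : Subgroup G) : Subgroup G :=
  ⨅ B ∈ {B : Subgroup G | IsBasal B ∧ A ⊓ B = ⊥}, Subgroup.normalizer (B : Set G)

/-!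
Under (H1), subgroups `K`, `L` with finitely many conjugates and `K ⊓ L = 1` commute. Fix a
normal subgroup `X` of finite index normalizing both. A subgroup with finitely many conjugates and
an abelian subgroup of finite index is trivial, so `L ⊓ C_G(L ⊓ X) = 1`; as `K ⊓ X` and `L ⊓ X`
commute, every `[l, k]` with `k ∈ K ⊓ X` lies in `L ⊓ C_G(L ⊓ X)`, so `L` centralizes `K ⊓ X`.
For `M = [K, L]` this yields first `M ⊓ K = M ⊓ L = 1`, and then that `K` and `L`, hence `M`,
centralize `M ⊓ X`, so `M = 1`.

Hence `A ≤ R(A)`. An element of `R(A) ⊓ C_G(A)` normalizes every basal subgroup, so it is trivial,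
and `C_G(A)` commutes with `R(A)`. Since `R(A ^ g) = R(A) ^ g`, and `R(A ^ g) ≤ C_G(A)` when
`A ^ g ⊓ A = 1`, the subgroup `R(A)` is basal.
-/

open Subgroup

section conjugation

lemma mem_conjBy {B : Subgroup G} {g x : G} : x ∈ conjBy B g ↔ g * x * g⁻¹ ∈ B := by
  simp only [conjBy, mem_map, MulEquiv.coe_toMonoidHom, MulAut.conj_apply, inv_inv]
  exact ⟨by rintro ⟨b, hb, rfl⟩; simpa [mul_assoc] using hb,
    fun h ↦ ⟨_, h, by group⟩⟩

lemma conjBy_mul (B : Subgroup G) (g h : G) : conjBy B (g * h) = conjBy (conjBy B g) h := by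
  ext x
  simp only [mem_conjBy, mul_inv_rev, mul_assoc]

lemma conjBy_inf (B C : Subgroup G) (g : G) : conjBy (B ⊓ C) g = conjBy B g ⊓ conjBy C g := by
  ext x
  simp only [mem_conjBy, mem_inf]

lemma conjBy_bot (g : G) : conjBy (⊥ : Subgroup G) g = ⊥ := by
  ext x
  simp [mem_conjBy, mul_inv_eq_one]

lemma conjBy_one (B : Subgroup G) : conjBy B 1 = B := by
  ext x
  simp [mem_conjBy]

lemma conjBy_surjective (g : G) : Function.Surjective (conjBy · g) :=
  fun B ↦ ⟨conjBy B g⁻¹, by simp only [← conjBy_mul, inv_mul_cancel, conjBy_one]⟩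

lemma conjBy_eq_bot_iff {B : Subgroup G} {g : G} : conjBy B g = ⊥ ↔ B = ⊥ :=
  map_eq_bot_iff_of_injective _ (MulEquiv.injective _)

lemma conjBy_eq_self_iff {B : Subgroup G} {g : G} :
    conjBy B g = B ↔ g ∈ normalizer (B : Set G) := by
  rw [mem_normalizer_iff, SetLike.ext_iff]
  simp only [mem_conjBy, iff_comm]

lemma normalizer_conjBy (B : Subgroup G) (g : G) :
    normalizer (conjBy B g : Set G) = conjBy (normalizer (B : Set G)) g :=
  (map_equiv_normalizer_eq B (MulAut.conj g⁻¹)).symm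

lemma isBasal_conjBy {B : Subgroup G} (hB : IsBasal B) (g : G) : IsBasal (conjBy B g) := by
  refine ⟨?_, fun h ↦ ?_⟩
  · rw [normalizer_conjBy, conjBy, map_equiv_eq_comap_symm', finiteIndex_iff,
      index_comap_of_surjective _ (MulEquiv.surjective _)]
    exact hB.1.index_ne_zero
  · have e : conjBy (conjBy B g) h = conjBy (conjBy B (g * h * g⁻¹)) g := by
      rw [← conjBy_mul, ← conjBy_mul, inv_mul_cancel_right]
    rcases hB.2 (g * h * g⁻¹) with hc | hc
    · exact .inl (by rw [e, hc])
    · exact .inr (by rw [e, ← conjBy_inf, hc, conjBy_bot])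

lemma isBasal_conjBy_iff {B : Subgroup G} {g : G} : IsBasal (conjBy B g) ↔ IsBasal B :=
  ⟨fun h ↦ by simpa [← conjBy_mul, conjBy_one] using isBasal_conjBy h g⁻¹,
    (isBasal_conjBy · g)⟩

end conjugation

section normalizer

lemma normalizer_le_normalizer_centralizer (H : Subgroup G) :
    normalizer (H : Set G) ≤ normalizer (centralizer (H : Set G) : Set G) := by
  rw [le_normalizer_iff]
  intro n hn c hc
  rw [mem_centralizer_iff] at hc ⊢
  intro h hh
  have hc' := hc _ ((mem_normalizer_iff''.mp hn h).mp hh)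
  calc h * (n * c * n⁻¹) = n * (n⁻¹ * h * n * c) * n⁻¹ := by group
    _ = n * (c * (n⁻¹ * h * n)) * n⁻¹ := by rw [hc']
    _ = n * c * n⁻¹ * h := by group

lemma le_normalizer_inf_of_normal {H K : Subgroup G} (hH : H ≤ normalizer (K : Set G))
    (X : Subgroup G) [X.Normal] : H ≤ normalizer ((K ⊓ X : Subgroup G) : Set G) :=
  (le_inf hH le_normalizer_of_normal).trans inf_normalizer_le_normalizer_inf

lemma normalizer_le_normalizer_centralizer_inf (K X : Subgroup G) [X.Normal] :
    normalizer (K : Set G) ≤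
      normalizer ((centralizer ((K ⊓ X : Subgroup G) : Set G) : Subgroup G) : Set G) :=
  (le_normalizer_inf_of_normal le_rfl X).trans (normalizer_le_normalizer_centralizer _)

lemma commutator_le_of_le_normalizer {K L C : Subgroup G} (hK : K ≤ normalizer (C : Set G))
    (hL : L ≤ C) : ⁅K, L⁆ ≤ C :=
  (commutator_mono le_rfl hL).trans (le_normalizer_iff_commutator_le_right.mp hK)

lemma commutator_eq_bot_of_inf_eq_bot {K L : Subgroup G} (hKL : K ⊓ L = ⊥)
    (hK : K ≤ normalizer (L : Set G)) (hL : L ≤ normalizer (K : Set G)) : ⁅K, L⁆ = ⊥ := by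
  rw [← le_bot_iff, ← hKL]
  refine le_inf ?_ (commutator_le_of_le_normalizer hK le_rfl)
  rw [commutator_comm]
  exact commutator_le_of_le_normalizer hL le_rfl

end normalizer

namespace HypH1

variable {K L M : Subgroup G}

lemma eq_bot_of_inf_le_centralizer (hH1 : HypH1 G) (hM : (normalizer (M : Set G)).FiniteIndex)
    (X : Subgroup G) [X.FiniteIndex]
    (hcomm : M ⊓ X ≤ centralizer ((M ⊓ X : Subgroup G) : Set G)) : M = ⊥ := by
  refine hH1 M hM ⟨M ⊓ X, inf_le_left, ?_, ?_⟩
  · rw [inf_comm, inf_relIndex_right]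
    exact (isFiniteRelIndex_of_finiteIndex (K := M)).relIndex_ne_zero
  · exact Group.isSolvable_of_comm fun a b ↦
      Subtype.ext (mem_centralizer_iff.mp (hcomm b.2) a a.2)

lemma inf_centralizer_inf_eq_bot (hH1 : HypH1 G) (hK : (normalizer (K : Set G)).FiniteIndex)
    (X : Subgroup G) [X.Normal] [X.FiniteIndex] :
    K ⊓ centralizer ((K ⊓ X : Subgroup G) : Set G) = ⊥ := by
  have hN : normalizer (K : Set G) ≤
      normalizer ((K ⊓ centralizer ((K ⊓ X : Subgroup G) : Set G) : Subgroup G) : Set G) :=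
    (le_inf le_rfl (normalizer_le_normalizer_centralizer_inf K X)).trans
      inf_normalizer_le_normalizer_inf
  have := hK
  refine hH1.eq_bot_of_inf_le_centralizer (finiteIndex_of_le hN) X ?_
  intro x hx
  exact centralizer_le (SetLike.coe_subset_coe.mpr (inf_le_inf_right X inf_le_left)) hx.1.2

lemma le_centralizer_inf_of_inf_eq_bot (hH1 : HypH1 G) (hL : (normalizer (L : Set G)).FiniteIndex)
    (hKL : K ⊓ L = ⊥) (X : Subgroup G) [X.Normal] [X.FiniteIndex]
    (hXK : X ≤ normalizer (K : Set G)) (hXL : X ≤ normalizer (L : Set G)) :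
    L ≤ centralizer ((K ⊓ X : Subgroup G) : Set G) := by
  have hcomm : K ⊓ X ≤ centralizer ((L ⊓ X : Subgroup G) : Set G) :=
    commutator_eq_bot_iff_le_centralizer.mp <| commutator_eq_bot_of_inf_eq_bot
      (eq_bot_mono (inf_le_inf inf_le_left inf_le_left) hKL)
      (le_normalizer_inf_of_normal (inf_le_right.trans hXL) X)
      (le_normalizer_inf_of_normal (inf_le_right.trans hXK) X)
  have hle : ⁅L, K ⊓ X⁆ ≤ L := by
    rw [commutator_comm]
    exact commutator_le_of_le_normalizer (inf_le_right.trans hXL) le_rfl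
  have hle' : ⁅L, K ⊓ X⁆ ≤ centralizer ((L ⊓ X : Subgroup G) : Set G) :=
    commutator_le_of_le_normalizer
      (le_normalizer.trans (normalizer_le_normalizer_centralizer_inf L X)) hcomm
  rw [← commutator_eq_bot_iff_le_centralizer, ← le_bot_iff,
    ← hH1.inf_centralizer_inf_eq_bot hL X]
  exact le_inf hle hle'

lemma commutator_inf_left_eq_bot (hH1 : HypH1 G) (hK : (normalizer (K : Set G)).FiniteIndex)
    (X : Subgroup G) [X.Normal] [X.FiniteIndex]
    (hL : L ≤ centralizer ((K ⊓ X : Subgroup G) : Set G)) : ⁅K, L⁆ ⊓ K = ⊥ := by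
  have hle : ⁅K, L⁆ ≤ centralizer ((K ⊓ X : Subgroup G) : Set G) :=
    commutator_le_of_le_normalizer
      (le_normalizer.trans (normalizer_le_normalizer_centralizer_inf K X)) hL
  exact eq_bot_mono (le_inf inf_le_right (inf_le_left.trans hle))
    (hH1.inf_centralizer_inf_eq_bot hK X)

lemma le_centralizer_of_inf_eq_bot (hH1 : HypH1 G) (hK : (normalizer (K : Set G)).FiniteIndex)
    (hL : (normalizer (L : Set G)).FiniteIndex) (hKL : K ⊓ L = ⊥) :
    K ≤ centralizer (L : Set G) := by
  have := hK
  have := hL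
  let X := (normalizer (K : Set G) ⊓ normalizer (L : Set G)).normalCore
  have hXK : X ≤ normalizer (K : Set G) := (normalCore_le _).trans inf_le_left
  have hXL : X ≤ normalizer (L : Set G) := (normalCore_le _).trans inf_le_right
  have hNM : normalizer (K : Set G) ⊓ normalizer (L : Set G) ≤
      normalizer ((⁅K, L⁆ : Subgroup G) : Set G) := by
    intro n hn
    simp_rw [mem_inf, mem_normalizer_iff_map_conj_eq, map_commutator] at hn ⊢
    rw [hn.1, hn.2]
  have hM : (normalizer ((⁅K, L⁆ : Subgroup G) : Set G)).FiniteIndex := finiteIndex_of_le hNM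
  have hXM : X ≤ normalizer ((⁅K, L⁆ : Subgroup G) : Set G) := (normalCore_le _).trans hNM
  have hMK : ⁅K, L⁆ ⊓ K = ⊥ :=
    hH1.commutator_inf_left_eq_bot hK X (hH1.le_centralizer_inf_of_inf_eq_bot hL hKL X hXK hXL)
  have hML : ⁅K, L⁆ ⊓ L = ⊥ := by
    rw [commutator_comm]
    exact hH1.commutator_inf_left_eq_bot hL X
      (hH1.le_centralizer_inf_of_inf_eq_bot hK (inf_comm K L ▸ hKL) X hXL hXK)
  have hMcomm : ⁅K, L⁆ ≤ centralizer ((⁅K, L⁆ ⊓ X : Subgroup G) : Set G) :=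
    (commutator_le_sup _ _).trans <| sup_le
      (hH1.le_centralizer_inf_of_inf_eq_bot hK hMK X hXM hXK)
      (hH1.le_centralizer_inf_of_inf_eq_bot hL hML X hXM hXL)
  rw [← commutator_eq_bot_iff_le_centralizer]
  exact hH1.eq_bot_of_inf_le_centralizer hM X (inf_le_left.trans hMcomm)

end HypH1

section rigidNormalizer

variable {A : Subgroup G}

lemma mem_rigidNormalizer {x : G} : x ∈ rigidNormalizer A ↔
    ∀ B : Subgroup G, IsBasal B → A ⊓ B = ⊥ → x ∈ normalizer (B : Set G) := by
  simp only [rigidNormalizer, mem_iInf, Set.mem_ofPred_eq, and_imp]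

lemma rigidNormalizer_conjBy (A : Subgroup G) (g : G) :
    rigidNormalizer (conjBy A g) = conjBy (rigidNormalizer A) g := by
  ext x
  rw [mem_conjBy, mem_rigidNormalizer, mem_rigidNormalizer, (conjBy_surjective g).forall]
  simp only [isBasal_conjBy_iff, ← conjBy_inf, conjBy_eq_bot_iff, normalizer_conjBy, mem_conjBy]

lemma normalizer_le_normalizer_rigidNormalizer (A : Subgroup G) :
    normalizer (A : Set G) ≤ normalizer (rigidNormalizer A : Set G) := fun n hn ↦ by
  rw [← conjBy_eq_self_iff, ← rigidNormalizer_conjBy, conjBy_eq_self_iff.mpr hn]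

lemma HypH1.le_rigidNormalizer (hH1 : HypH1 G) (hA : (normalizer (A : Set G)).FiniteIndex) :
    A ≤ rigidNormalizer A := fun _ ha ↦ mem_rigidNormalizer.mpr fun _ hB hAB ↦
  centralizer_le_normalizer _ (hH1.le_centralizer_of_inf_eq_bot hA hB.1 hAB ha)

lemma rigidNormalizer_inf_centralizer_eq_bot
    (htriv : (⨅ B ∈ {B : Subgroup G | IsBasal B}, normalizer (B : Set G)) = ⊥)
    (A : Subgroup G) : rigidNormalizer A ⊓ centralizer (A : Set G) = ⊥ := by
  rw [← le_bot_iff, ← htriv]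
  refine le_iInf₂ fun B hB x hx ↦ ?_
  obtain ⟨hxR, hxC⟩ := mem_inf.mp hx
  obtain hAB | ⟨y, hy, hy1⟩ := (A ⊓ B).bot_or_exists_ne_one
  · exact mem_rigidNormalizer.mp hxR B hB hAB
  -- `x` fixes the nontrivial element `y ∈ A ⊓ B`, so `B ^ x` meets `B` nontrivially
  refine conjBy_eq_self_iff.mp ((hB.2 x).resolve_right fun h ↦ hy1 ?_)
  have hyx : y ∈ conjBy B x ⊓ B := by
    refine ⟨mem_conjBy.mpr ?_, hy.2⟩
    rw [← mem_centralizer_iff.mp hxC y hy.1, mul_inv_cancel_right]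
    exact hy.2
  exact mem_bot.mp (h ▸ hyx)

lemma HypH1.centralizer_rigidNormalizer (hH1 : HypH1 G)
    (htriv : (⨅ B ∈ {B : Subgroup G | IsBasal B}, normalizer (B : Set G)) = ⊥)
    (hA : (normalizer (A : Set G)).FiniteIndex) :
    centralizer (rigidNormalizer A : Set G) = centralizer (A : Set G) := by
  have := hA
  refine le_antisymm (centralizer_le (hH1.le_rigidNormalizer hA)) ?_
  exact hH1.le_centralizer_of_inf_eq_bot
    (finiteIndex_of_le (normalizer_le_normalizer_centralizer A))
    (finiteIndex_of_le (normalizer_le_normalizer_rigidNormalizer A))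
    (inf_comm (rigidNormalizer A) _ ▸ rigidNormalizer_inf_centralizer_eq_bot htriv A)

lemma HypH1.isBasal_rigidNormalizer (hH1 : HypH1 G)
    (htriv : (⨅ B ∈ {B : Subgroup G | IsBasal B}, normalizer (B : Set G)) = ⊥)
    (hA : IsBasal A) : IsBasal (rigidNormalizer A) := by
  have := hA.1
  refine ⟨finiteIndex_of_le (normalizer_le_normalizer_rigidNormalizer A), fun g ↦ ?_⟩
  have hAg := (isBasal_conjBy hA g).1
  rw [← rigidNormalizer_conjBy]
  refine (hA.2 g).imp (fun h ↦ by rw [h]) fun h ↦ ?_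
  have hle : rigidNormalizer (conjBy A g) ≤ centralizer (A : Set G) := by
    rw [le_centralizer_iff, hH1.centralizer_rigidNormalizer htriv hAg]
    exact hH1.le_centralizer_of_inf_eq_bot hA.1 hAg (inf_comm A _ ▸ h)
  exact eq_bot_mono (inf_le_inf_right _ hle)
    (inf_comm (rigidNormalizer A) _ ▸ rigidNormalizer_inf_centralizer_eq_bot htriv A)

end rigidNormalizer

theorem statement15_general (hH1 : HypH1 G)
    (htriv : (⨅ B ∈ {B : Subgroup G | IsBasal B}, Subgroup.normalizer (B : Set G)) = ⊥)
    (A : Subgroup G) (hA : IsBasal A) :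
    IsBasal (rigidNormalizer A) ∧
      Subgroup.centralizer ((rigidNormalizer A : Subgroup G) : Set G) =
        Subgroup.centralizer (A : Set G) :=
  ⟨hH1.isBasal_rigidNormalizer htriv hA, hH1.centralizer_rigidNormalizer htriv hA.1⟩

theorem statement15 (hH1 : HypH1 G) (hH2 : HypH2 G)
    (htriv : (⨅ B ∈ {B : Subgroup G | IsBasal B}, Subgroup.normalizer (B : Set G)) = ⊥)
    (A : Subgroup G) (hA : IsBasal A) (hAn : A ≠ ⊥) :
    IsBasal (rigidNormalizer A) ∧
      Subgroup.centralizer ((rigidNormalizer A : Subgroup G) : Set G) =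
        Subgroup.centralizer (A : Set G) :=
  statement15_general hH1 htriv A hA
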